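/- arXiv:2006.01086 — 5 statements merged into one kernel-verified Lean document; each statement's English description precedes it below -/
import Mathlib

section
/- Suppose that κ < λ are infinite cardinals such that λ is regular and <κ-inaccessible. Suppose also that U is a Δ-system consisting of sets of ordinals (i.e., there is a set r with u ∩ v = r for all distinct u, v ∈ U), that |U| ≥ λ, and that |u| < κ for all u ∈ U. Then there is U* ⊆ U such that |U*| = λ and U* is a uniform Δ-system, i.e., there is a set r such that for all distinct u, v ∈ U*, u and v are aligned and u ∩ v = r. -/
/-!
Colour each `u ∈ U` by its order type together with the order types of its initial segments
`u ∩ γ` at the points `γ` of the root `r`. Distinct members of `U` meet exactly in `r`, so two of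
them with the same colour are aligned. As `|u|, |r| < κ`, there are at most `κ · κ^|r| ≤ κ^{<κ} < λ`
colours, and by regularity of `λ` some colour class has size `λ`.
-/

open Cardinal Set

noncomputable section

/-- The order type of a set of ordinals. -/
noncomputable def otp (s : Set Ordinal.{0}) : Ordinal.{0} :=
  sInf {o : Ordinal.{0} | Nonempty (s ≃o Set.Iio o)}

/-- The `i`-th element of a set of ordinals, in increasing order. -/
noncomputable def nth (s : Set Ordinal.{0}) (i : Ordinal.{0}) : Ordinal.{0} :=
  sInf {α | α ∈ s ∧ otp (s ∩ Set.Iio α) = i}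

/-- `a[m] = {a(i) : i ∈ m}`. -/
noncomputable def img (a m : Set Ordinal.{0}) : Set Ordinal.{0} := nth a '' m

/-- Two sets of ordinals are aligned. -/
def Aligned (a b : Set Ordinal.{0}) : Prop :=
  otp a = otp b ∧ ∀ γ ∈ a ∩ b, otp (a ∩ Set.Iio γ) = otp (b ∩ Set.Iio γ)

/-- `r(a,b) = {i < otp a | a(i) ∈ b}`. -/
noncomputable def idx (a b : Set Ordinal.{0}) : Set Ordinal.{0} :=
  {i | i < otp a ∧ nth a i ∈ b}

/-- `[H]^n`: the `n`-element subsets of `H`. -/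
def sizeN (H : Set Ordinal.{0}) (n : ℕ) : Set (Set Ordinal.{0}) :=
  {b | b ⊆ H ∧ b.Finite ∧ b.ncard = n}

/-- `[H]^λ`: the subsets of `H` of cardinality `λ`. -/
def sizeC (H : Set Ordinal.{0}) (lam : Cardinal.{0}) : Set (Set Ordinal.{0}) :=
  {A | A ⊆ H ∧ #A = Cardinal.lift.{1,0} lam}

/-- uniform n-dimensional Δ-system with explicit witnesses. -/
def IsUnifDeltaSysWith (H : Set Ordinal.{0}) (n : ℕ) (u : Set Ordinal.{0} → Set Ordinal.{0})
    (ρ : Ordinal.{0}) (r : Set Ordinal.{0} → Set Ordinal.{0}) : Prop :=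
  (∀ m ⊆ Set.Iio (n : Ordinal.{0}), r m ⊆ Set.Iio ρ) ∧
  (∀ b ∈ sizeN H n, otp (u b) = ρ) ∧
  (∀ m ⊆ Set.Iio (n : Ordinal.{0}), ∀ a ∈ sizeN H n, ∀ b ∈ sizeN H n,
    Aligned a b → idx a b = m →
    Aligned (u a) (u b) ∧ idx (u a) (u b) = r m) ∧
  (∀ m₀ ⊆ Set.Iio (n : Ordinal.{0}), ∀ m₁ ⊆ Set.Iio (n : Ordinal.{0}),
    r (m₀ ∩ m₁) = r m₀ ∩ r m₁)

def IsUnifDeltaSys (H : Set Ordinal.{0}) (n : ℕ) (u : Set Ordinal.{0} → Set Ordinal.{0}) : Prop :=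
  ∃ ρ r, IsUnifDeltaSysWith H n u ρ r

/-- (not necessarily uniform) n-dimensional Δ-system. -/
def IsDeltaSys (H : Set Ordinal.{0}) (n : ℕ) (u : Set Ordinal.{0} → Set Ordinal.{0}) : Prop :=
  ∃ R : Set Ordinal.{0} → Set Ordinal.{0} → Set Ordinal.{0},
    ∀ m ⊆ Set.Iio (n : Ordinal.{0}), ∀ b ∈ sizeN H n, ∀ b' ∈ sizeN H n,
      Aligned b b' → idx b b' = m → u b ∩ u b' = R m (b ∩ b')

/-- `σ(λ, n+1)` in the paper's notation (so indices shift by one). -/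
noncomputable def sigmaC (lam : Cardinal.{0}) : ℕ → Cardinal.{0}
  | 0 => lam
  | n + 1 => Order.succ ((2 : Cardinal.{0}) ^< sigmaC lam n)

/-- `μ → (λ)^n_ν`. -/
def PartitionRel (μ lam ν : Cardinal.{0}) (n : ℕ) : Prop :=
  ∀ c : Set Ordinal.{0} → Ordinal.{0},
    (∀ b ∈ sizeN (Set.Iio μ.ord) n, c b < ν.ord) →
    ∃ H ∈ sizeC (Set.Iio μ.ord) lam, ∃ k, ∀ b ∈ sizeN H n, c b = k

noncomputable def tpInt (a b : Set Ordinal.{0}) : Set (Ordinal.{0} × Ordinal.{0}) :=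
  {p | p.1 < otp a ∧ p.2 < otp b ∧ nth a p.1 = nth b p.2}

def AlignedAbove (a b : Set Ordinal.{0}) (i : Ordinal.{0}) : Prop :=
  Aligned (img a (Set.Ico i (otp a))) (img b (Set.Ico i (otp b)))

def MPossible (a : Set Ordinal.{0}) (m : ℕ) (α : Ordinal.{0}) : Prop :=
  (0 < m → nth a ((m - 1 : ℕ) : Ordinal.{0}) < α) ∧
  (((m + 1 : ℕ) : Ordinal.{0}) < otp a → α < nth a ((m + 1 : ℕ) : Ordinal.{0}))

noncomputable def replaceNth (a : Set Ordinal.{0}) (m : ℕ) (α : Ordinal.{0}) : Set Ordinal.{0} :=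
  (a \ {nth a (m : Ordinal.{0})}) ∪ {α}

def MoreoverClause (H : Set Ordinal.{0}) (n : ℕ) (u : Set Ordinal.{0} → Set Ordinal.{0}) : Prop :=
  ∀ a ∈ sizeN H n, ∀ b ∈ sizeN H n, ∀ m : ℕ, m < n →
    AlignedAbove a b (m : Ordinal.{0}) → nth a (m : Ordinal.{0}) = nth b (m : Ordinal.{0}) →
    ∀ α ∈ H, MPossible a m α → MPossible b m α →
      tpInt (u a) (u b) = tpInt (u (replaceNth a m α)) (u (replaceNth b m α))

lemma exists_orderIso_Iio_ordinal (α : Type) [LinearOrder α] [WellFoundedLT α] :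
    ∃ o : Ordinal.{0}, Nonempty (α ≃o Iio o) :=
  ⟨_, ⟨(Ordinal.typein (α := α) (· < ·)).orderIsoIio⟩⟩

lemma exists_orderIso_Iio_of_small (s : Set Ordinal.{0}) [Small.{0} s] :
    ∃ o : Ordinal.{0}, Nonempty (s ≃o Iio o) := by
  obtain ⟨b, hb⟩ := Ordinal.bddAbove_of_small (s := s)
  -- `s` lives in `Type 1`; move it into `Type` through `(succ b).ToType`
  let f : s → (Order.succ b).ToType := fun x => Ordinal.ToType.mk ⟨x, Order.lt_succ_iff.2 (hb x.2)⟩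
  have hf : StrictMono f := fun x y h => Ordinal.ToType.mk.strictMono (by exact_mod_cast h)
  obtain ⟨o, ⟨g⟩⟩ := exists_orderIso_Iio_ordinal (Set.range f)
  exact ⟨o, ⟨(hf.orderIso f).trans g⟩⟩

lemma mk_eq_lift_card_otp (s : Set Ordinal.{0}) [Small.{0} s] :
    #s = lift (otp s).card := by
  obtain ⟨g⟩ : Nonempty (s ≃o Iio (otp s)) := csInf_mem (exists_orderIso_Iio_of_small s)
  rw [mk_congr g.toEquiv, Cardinal.mk_Iio_ordinal]

lemma otp_lt_ord {s : Set Ordinal.{0}} {κ : Cardinal.{0}} (h : #s < lift κ) :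
    otp s < κ.ord := by
  have : Small.{0} s := small_iff_lift_mk_lt_univ.2 (by simpa using h.trans (lift_lt_univ κ))
  rw [lt_ord, ← lift_lt.{0, 1}, ← mk_eq_lift_card_otp]
  exact h

lemma mk_Iio_ord_prod_fun_lt {κ lam : Cardinal.{u}} (hlam : ℵ₀ ≤ lam) (hkl : κ < lam)
    (hinacc : κ ^< κ < lam) {β : Type (u + 1)} (hβ : #β < lift.{u + 1} κ) :
    #(Iio κ.ord × (β → Iio κ.ord)) < lift.{u + 1} lam := by
  obtain ⟨μ, hμ⟩ := mem_range_lift_of_le hβ.le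
  have hIio : #(Iio κ.ord) = lift.{u + 1} κ := by rw [Cardinal.mk_Iio_ordinal, card_ord]
  rw [mk_prod, ← power_def, hIio, ← hμ, ← lift_power, lift_id, lift_id, ← lift_mul, lift_lt]
  have hμκ : μ < κ := lift_lt.1 (hμ ▸ hβ)
  exact mul_lt_of_lt hlam hkl ((le_powerlt κ hμκ).trans_lt hinacc)

theorem stmt0_general (κ lam : Cardinal.{0}) (hkl : κ < lam)
    (hreg : lam.IsRegular) (hinacc : ∀ ν < lam, ν ^< κ < lam)
    (U : Set (Set Ordinal.{0})) (r : Set Ordinal.{0})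
    (hroot : ∀ u ∈ U, ∀ v ∈ U, u ≠ v → u ∩ v = r)
    (hsize : Cardinal.lift.{1,0} lam ≤ #U)
    (hsmall : ∀ u ∈ U, #u < Cardinal.lift.{1,0} κ) :
    ∃ U' ⊆ U, #U' = Cardinal.lift.{1,0} lam ∧
      ∃ r' : Set Ordinal.{0}, ∀ u ∈ U', ∀ v ∈ U', u ≠ v → Aligned u v ∧ u ∩ v = r' := by
  have hlam : ℵ₀ ≤ lift.{1} lam := hreg.lift.aleph0_le
  have hsmall_Iio : ∀ u ∈ U, ∀ γ, #(u ∩ Iio γ : Set _) < lift κ := fun u hu γ =>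
    (mk_le_mk_of_subset inter_subset_left).trans_lt (hsmall u hu)
  obtain ⟨u₀, hu₀, v₀, hv₀, hne⟩ := (infinite_coe_iff.1 (infinite_iff.2 (hlam.trans hsize))).nontrivial
  have hr : #r < lift κ := by
    rw [← hroot u₀ hu₀ v₀ hv₀ hne]
    exact (mk_le_mk_of_subset inter_subset_left).trans_lt (hsmall u₀ hu₀)
  let c : U → Iio κ.ord × (r → Iio κ.ord) := fun u =>
    (⟨otp u, otp_lt_ord (hsmall u u.2)⟩, fun γ => ⟨otp (u.1 ∩ Iio γ), otp_lt_ord (hsmall_Iio u u.2 γ)⟩)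
  obtain ⟨x, t, htU, hlam_t, hct⟩ := infinite_pigeonhole_set c _ hsize hlam <| by
    rw [hreg.lift.cof_ord]
    exact mk_Iio_ord_prod_fun_lt hreg.aleph0_le hkl (hinacc κ hkl) hr
  obtain ⟨U', hU't, hU'⟩ := le_mk_iff_exists_subset.1 hlam_t
  refine ⟨U', hU't.trans htU, hU', r, fun u hu v hv huv => ?_⟩
  have hcuv : c ⟨u, _⟩ = c ⟨v, _⟩ := (hct (hU't hu)).trans (hct (hU't hv)).symm
  have huv_eq := hroot u (htU (hU't hu)) v (htU (hU't hv)) huv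
  have hotp : otp u = otp v := congrArg (·.1.1) hcuv
  have hinit : ∀ γ : r, otp (u ∩ Iio γ) = otp (v ∩ Iio γ) := fun γ =>
    congrArg (fun p => (p.2 γ).1) hcuv
  exact ⟨⟨hotp, fun γ hγ => hinit ⟨γ, huv_eq ▸ hγ⟩⟩, huv_eq⟩

/-- the classical Δ-system lemma refinement to a *uniform* Δ-system:
if `κ < λ` are infinite cardinals, `λ` regular and `<κ`-inaccessible, and `U` is a
Δ-system of sets of ordinals (with root `r`), `|U| ≥ λ`, `|u| < κ` for all `u ∈ U`,
then some `U* ⊆ U` of cardinality `λ` is a uniform Δ-system. -/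
theorem stmt0 (κ lam : Cardinal.{0}) (hk : ℵ₀ ≤ κ) (hkl : κ < lam)
    (hreg : lam.IsRegular) (hinacc : ∀ ν < lam, ν ^< κ < lam)
    (U : Set (Set Ordinal.{0})) (r : Set Ordinal.{0})
    (hroot : ∀ u ∈ U, ∀ v ∈ U, u ≠ v → u ∩ v = r)
    (hsize : Cardinal.lift.{1,0} lam ≤ #U)
    (hsmall : ∀ u ∈ U, #u < Cardinal.lift.{1,0} κ) :
    ∃ U' ⊆ U, #U' = Cardinal.lift.{1,0} lam ∧
      ∃ r' : Set Ordinal.{0}, ∀ u ∈ U', ∀ v ∈ U', u ≠ v → Aligned u v ∧ u ∩ v = r' :=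
  stmt0_general κ lam hkl hreg hinacc U r hroot hsize hsmall

end
end

section
/- Suppose that 1 ≤ n < ω, H is a set of ordinals, and ⟨u_b : b ∈ [H]^n⟩ is a uniform n-dimensional Δ-system as witnessed by an ordinal ρ and sets ⟨r_m : m ⊆ n⟩. Then for all m ⊆ n and all a, b ∈ [H]^n, if a[m] = b[m], then u_a[r_m] = u_b[r_m]. -/
open Cardinal Set

noncomputable section

/-!
If `a, c ∈ [H]^n` differ in at most one coordinate, they are aligned and `r(a,c)` is the set of
coordinates where they agree; when it contains `m`, conditions (2) and (3) make `u_a, u_c` aligned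
with `r(u_a,u_c) ⊇ r_m`, so `u_a` and `u_c` agree on the coordinates in `r_m`.
Since `a[m] = b[m]` means that `a` and `b` agree on `m`, it remains to connect `a` and `b` by such
one-coordinate changes inside `[H]^n`: the coordinatewise minimum of `a` and `b` is again
increasing, and replacing the coordinates of `a` by those of the minimum from the bottom up keeps
every intermediate sequence increasing. The same holds for `b`, so
`u_a[r_m] = u_{min(a,b)}[r_m] = u_b[r_m]`.
-/

section OrderType

variable {s t : Set Ordinal.{0}} {o j γ : Ordinal.{0}}

theorem eq_of_orderIso_Iio {o' : Ordinal.{0}} (e : Iio o ≃o Iio o') : o = o' := by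
  have h : @Ordinal.type (Iio o) (· < ·) _ = @Ordinal.type (Iio o') (· < ·) _ :=
    Ordinal.type_eq.2 ⟨e.toRelIsoLT⟩
  rwa [Ordinal.type_Iio_lt, Ordinal.type_Iio_lt, Ordinal.typein_ordinal,
    Ordinal.typein_ordinal, Ordinal.lift_inj] at h

theorem otp_eq_of_orderIso (e : s ≃o Iio o) : otp s = o := by
  obtain ⟨e'⟩ := csInf_mem (s := {o | Nonempty (s ≃o Iio o)}) ⟨o, ⟨e⟩⟩
  exact eq_of_orderIso_Iio (e'.symm.trans e)

theorem exists_orderIso_of_otp_ne_zero (h : otp s ≠ 0) : Nonempty (s ≃o Iio (otp s)) := by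
  obtain hs | hs := {o : Ordinal.{0} | Nonempty (s ≃o Iio o)}.eq_empty_or_nonempty
  · exact absurd (by rw [otp, hs, Ordinal.sInf_empty]) h
  · exact csInf_mem hs

theorem otp_inter_Iio_eq (e : s ≃o Iio o) (hγ : γ ∈ s) : otp (s ∩ Iio γ) = e ⟨γ, hγ⟩ := by
  refine otp_eq_of_orderIso (StrictMono.orderIsoOfSurjective
    (fun x : ↥(s ∩ Iio γ) => (⟨e ⟨x, x.2.1⟩, e.lt_iff_lt.2 x.2.2⟩ : Iio (e ⟨γ, hγ⟩ : Ordinal)))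
    (fun x y hxy => e.lt_iff_lt.2 hxy) ?_)
  rintro ⟨i, hi⟩
  have hio : i < o := hi.trans (e ⟨γ, hγ⟩).2
  refine ⟨⟨e.symm ⟨i, hio⟩, (e.symm ⟨i, hio⟩).2, ?_⟩, by simp⟩
  exact Subtype.coe_lt_coe.2 (by simpa using e.symm.lt_iff_lt.2 (show ⟨i, hio⟩ < e ⟨γ, hγ⟩ from hi))

theorem nth_eq_of_orderIso (e : s ≃o Iio o) (hj : j < o) : nth s j = e.symm ⟨j, hj⟩ := by
  have hset : {α | α ∈ s ∧ otp (s ∩ Iio α) = j} = {(e.symm ⟨j, hj⟩ : Ordinal)} := by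
    ext α
    simp only [mem_ofPred_eq, mem_singleton_iff]
    constructor
    · rintro ⟨hα, hotp⟩
      rw [otp_inter_Iio_eq e hα] at hotp
      have he : e ⟨α, hα⟩ = ⟨j, hj⟩ := Subtype.ext hotp
      rw [← he, e.symm_apply_apply]
    · rintro rfl
      exact ⟨Subtype.prop _, by simp [otp_inter_Iio_eq e]⟩
  rw [nth, hset, csInf_singleton]

theorem nth_mem_of_orderIso (e : s ≃o Iio o) (hj : j < o) : nth s j ∈ s := by
  rw [nth_eq_of_orderIso e hj]
  exact Subtype.prop _

theorem otp_inter_Iio_nth (e : s ≃o Iio o) (hj : j < o) : otp (s ∩ Iio (nth s j)) = j := by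
  simp [nth_eq_of_orderIso e hj, otp_inter_Iio_eq e]

theorem nth_otp_inter_Iio (e : s ≃o Iio o) (hγ : γ ∈ s) : nth s (otp (s ∩ Iio γ)) = γ := by
  rw [otp_inter_Iio_eq e hγ, nth_eq_of_orderIso e (e ⟨γ, hγ⟩).2]
  simp

theorem strictMonoOn_nth (e : s ≃o Iio o) : StrictMonoOn (nth s) (Iio o) := by
  intro i hi j hj hij
  rw [nth_eq_of_orderIso e hi, nth_eq_of_orderIso e hj]
  exact e.symm.lt_iff_lt.2 hij

theorem image_nth_Iio (e : s ≃o Iio o) : nth s '' Iio o = s := by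
  refine Subset.antisymm (image_subset_iff.2 fun j hj => nth_mem_of_orderIso e hj)
    fun γ hγ => ⟨_, ?_, nth_otp_inter_Iio e hγ⟩
  rw [otp_inter_Iio_eq e hγ]
  exact Subtype.prop _

theorem nth_image_Iio {f : Ordinal.{0} → Ordinal.{0}} (hf : StrictMonoOn f (Iio o))
    (hj : j < o) : nth (f '' Iio o) j = f j := by
  rw [nth_eq_of_orderIso (hf.orderIso f (Iio o)).symm hj, OrderIso.symm_symm]
  rfl

theorem Aligned.nth_eq (h : Aligned s t) (hj : j ∈ idx s t) : nth s j = nth t j := by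
  obtain ⟨hjs, hjt⟩ := hj
  obtain ⟨es⟩ := exists_orderIso_of_otp_ne_zero hjs.ne_bot
  obtain ⟨et⟩ := exists_orderIso_of_otp_ne_zero (h.1 ▸ hjs.ne_bot)
  have hγ : otp (t ∩ Iio (nth s j)) = j := by
    rw [← h.2 _ ⟨nth_mem_of_orderIso es hjs, hjt⟩, otp_inter_Iio_nth es hjs]
  conv_rhs => rw [← hγ]
  exact (nth_otp_inter_Iio et hjt).symm

theorem aligned_of_nth_mem (es : s ≃o Iio o) (et : t ≃o Iio o)
    (h : ∀ j < o, nth s j ∈ t → nth t j = nth s j) :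
    Aligned s t ∧ idx s t = {j | j < o ∧ nth s j = nth t j} := by
  refine ⟨⟨(otp_eq_of_orderIso es).trans (otp_eq_of_orderIso et).symm, ?_⟩, ?_⟩
  · rintro γ ⟨hγs, hγt⟩
    have hj : otp (s ∩ Iio γ) < o := by rw [otp_inter_Iio_eq es hγs]; exact Subtype.prop _
    have hγ : nth s (otp (s ∩ Iio γ)) = γ := nth_otp_inter_Iio es hγs
    rw [← otp_inter_Iio_nth et hj, h _ hj (by rwa [hγ]), hγ]
  · ext j
    simp only [idx, otp_eq_of_orderIso es, mem_ofPred_eq]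
    refine ⟨fun ⟨hj, hjt⟩ => ⟨hj, (h j hj hjt).symm⟩, fun ⟨hj, hst⟩ => ⟨hj, ?_⟩⟩
    rw [hst]
    exact nth_mem_of_orderIso et hj

end OrderType

theorem StrictMonoOn.eqOn_of_image_eq {α β : Type*} [LinearOrder α] [WellFoundedLT α]
    [Preorder β] {f g : α → β} {m : Set α} (hf : StrictMonoOn f m) (hg : StrictMonoOn g m)
    (h : f '' m = g '' m) : EqOn f g m := fun j hj =>
  congrArg Subtype.val (DFunLike.congr_fun (Subsingleton.elim (hf.orderIso f m)
    ((hg.orderIso g m).trans (OrderIso.setCongr _ _ h.symm))) (⟨j, hj⟩ : m))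

section Finite

variable {H a b m : Set Ordinal.{0}} {n : ℕ}

theorem ncard_Iio_natCast (n : ℕ) : (Iio (n : Ordinal.{0})).ncard = n := by
  rw [← Ordinal.natCast_image_Iio, ncard_image_of_injective _ Nat.cast_injective,
    ← Finset.coe_Iio, ncard_coe_finset, Nat.card_Iio]

theorem finite_Iio_natCast (n : ℕ) : (Iio (n : Ordinal.{0})).Finite := by
  rw [← Ordinal.natCast_image_Iio]
  exact (finite_Iio n).image _

theorem exists_orderIso_of_mem_sizeN (ha : a ∈ sizeN H n) :
    Nonempty (a ≃o Iio (n : Ordinal.{0})) := by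
  obtain ⟨-, hfin, hcard⟩ := ha
  have e₁ : Fin n ≃o hfin.toFinset :=
    hfin.toFinset.orderIsoOfFin (by rw [← hcard, ncard_eq_toFinset_card a hfin])
  have e₂ : Fin n ≃o Iio (n : Ordinal.{0}) :=
    (Fin.orderIsoSubtype.trans (StrictMonoOn.orderIso (Nat.cast : ℕ → Ordinal.{0}) (Iio n)
      fun _ _ _ _ h => Nat.cast_lt.2 h)).trans
      (OrderIso.setCongr _ _ (Ordinal.natCast_image_Iio n))
  exact ⟨(OrderIso.setCongr a _ hfin.coe_toFinset.symm).trans (e₁.symm.trans e₂)⟩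

theorem image_mem_sizeN {f : Ordinal.{0} → Ordinal.{0}} (hf : StrictMonoOn f (Iio n))
    (hH : ∀ j < (n : Ordinal.{0}), f j ∈ H) : f '' Iio (n : Ordinal.{0}) ∈ sizeN H n :=
  ⟨image_subset_iff.2 hH, (finite_Iio_natCast n).image f,
    hf.injOn.ncard_image.trans (ncard_Iio_natCast n)⟩

theorem nth_eq_nth_of_img_eq (ha : a ∈ sizeN H n) (hb : b ∈ sizeN H n)
    (hm : m ⊆ Iio (n : Ordinal.{0})) (h : img a m = img b m) : EqOn (nth a) (nth b) m := by
  obtain ⟨ea⟩ := exists_orderIso_of_mem_sizeN ha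
  obtain ⟨eb⟩ := exists_orderIso_of_mem_sizeN hb
  exact ((strictMonoOn_nth ea).mono hm).eqOn_of_image_eq ((strictMonoOn_nth eb).mono hm) h

end Finite

theorem StrictMonoOn.ite_min {α β : Type*} [LinearOrder α] [LinearOrder β] {f g : α → β}
    {s : Set α} (hf : StrictMonoOn f s) (hg : StrictMonoOn g s) (k : α) :
    StrictMonoOn (fun j => if j < k then min (f j) (g j) else f j) s := by
  intro i hi j hj hij
  by_cases hjk : j < k
  · simp only [hij.trans hjk, hjk, if_true]
    exact min_lt_min (hf hi hj hij) (hg hi hj hij)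
  · by_cases hik : i < k
    · simp only [hik, hjk, if_true, if_false]
      exact (min_le_left _ _).trans_lt (hf hi hj hij)
    · simp only [hik, hjk, if_false]
      exact hf hi hj hij

namespace IsUnifDeltaSysWith

variable {H : Set Ordinal.{0}} {n : ℕ} {u : Set Ordinal.{0} → Set Ordinal.{0}} {ρ : Ordinal.{0}}
  {r : Set Ordinal.{0} → Set Ordinal.{0}} {m K a b c : Set Ordinal.{0}}

theorem r_subset_r (hu : IsUnifDeltaSysWith H n u ρ r) (hmK : m ⊆ K)
    (hK : K ⊆ Iio (n : Ordinal.{0})) : r m ⊆ r K := by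
  have h := hu.2.2.2 m (hmK.trans hK) K hK
  rw [inter_eq_left.2 hmK] at h
  exact h ▸ inter_subset_right

theorem img_eq_of_eqOn_of_forall_ne (hu : IsUnifDeltaSysWith H n u ρ r) (ha : a ∈ sizeN H n)
    (hc : c ∈ sizeN H n) (hm : m ⊆ Iio (n : Ordinal.{0})) (hmc : EqOn (nth a) (nth c) m)
    {k : Ordinal.{0}} (hk : ∀ j < (n : Ordinal.{0}), j ≠ k → nth a j = nth c j) :
    img (u a) (r m) = img (u c) (r m) := by
  obtain ⟨ea⟩ := exists_orderIso_of_mem_sizeN ha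
  obtain ⟨ec⟩ := exists_orderIso_of_mem_sizeN hc
  have hmem : ∀ j < (n : Ordinal.{0}), nth a j ∈ c → nth c j = nth a j := by
    intro j hj hjc
    obtain rfl | hjk := eq_or_ne j k
    · rw [← image_nth_Iio ec] at hjc
      obtain ⟨i, hi, hij⟩ := hjc
      obtain rfl | hik := eq_or_ne i j
      · exact hij
      · rw [← hk i hi hik] at hij
        exact absurd ((strictMonoOn_nth ea).injOn hi hj hij) hik
    · exact (hk j hj hjk).symm
  obtain ⟨hal, hidx⟩ := aligned_of_nth_mem ea ec hmem
  obtain ⟨hual, huidx⟩ := hu.2.2.1 _ (fun j hj => hj.1) a ha c hc hal hidx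
  have hrm : r m ⊆ idx (u a) (u c) :=
    huidx ▸ hu.r_subset_r (fun j hj => ⟨hm hj, hmc hj⟩) fun j hj => hj.1
  exact image_congr fun j hj => hual.nth_eq (hrm hj)

theorem img_eq_img_min (hu : IsUnifDeltaSysWith H n u ρ r) (ha : a ∈ sizeN H n)
    (hb : b ∈ sizeN H n) (hm : m ⊆ Iio (n : Ordinal.{0})) (hab : EqOn (nth a) (nth b) m) :
    img (u a) (r m) =
      img (u ((fun j => min (nth a j) (nth b j)) '' Iio (n : Ordinal.{0}))) (r m) := by
  obtain ⟨ea⟩ := exists_orderIso_of_mem_sizeN ha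
  obtain ⟨eb⟩ := exists_orderIso_of_mem_sizeN hb
  set g : ℕ → Ordinal.{0} → Ordinal.{0} :=
    fun k j => if j < k then min (nth a j) (nth b j) else nth a j with hg_def
  have hg (k : ℕ) : StrictMonoOn (g k) (Iio (n : Ordinal.{0})) :=
    (strictMonoOn_nth ea).ite_min (strictMonoOn_nth eb) _
  have hgH (k : ℕ) : g k '' Iio (n : Ordinal.{0}) ∈ sizeN H n := by
    refine image_mem_sizeN (hg k) fun j hj => ?_
    have haH := ha.1 (nth_mem_of_orderIso ea hj)
    have hbH := hb.1 (nth_mem_of_orderIso eb hj)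
    simp only [hg_def]
    split_ifs
    · rcases min_choice (nth a j) (nth b j) with h | h <;> rw [h] <;> assumption
    · exact haH
  have hchain (k : ℕ) : img (u a) (r m) = img (u (g k '' Iio (n : Ordinal.{0}))) (r m) := by
    induction k with
    | zero => simp [hg_def, image_nth_Iio ea]
    | succ k ih =>
      refine ih.trans (hu.img_eq_of_eqOn_of_forall_ne (hgH k) (hgH (k + 1)) hm
        (k := k) (fun j hj => ?_) fun j hj hjk => ?_)
      · rw [nth_image_Iio (hg k) (hm hj), nth_image_Iio (hg (k + 1)) (hm hj)]
        simp [hg_def, hab hj]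
      · rw [nth_image_Iio (hg k) hj, nth_image_Iio (hg (k + 1)) hj]
        simp [hg_def, Order.lt_add_one_iff, hjk.le_iff_lt]
  rw [hchain n]
  refine congrArg (fun s => img (u s) (r m)) (image_congr fun j hj => ?_)
  simp [hg_def, mem_Iio.1 hj]

end IsUnifDeltaSysWith

theorem stmt1_general (n : ℕ) (H : Set Ordinal.{0})
    (u : Set Ordinal.{0} → Set Ordinal.{0})
    (ρ : Ordinal.{0}) (r : Set Ordinal.{0} → Set Ordinal.{0})
    (hu : IsUnifDeltaSysWith H n u ρ r) :
    ∀ m ⊆ Set.Iio (n : Ordinal.{0}), ∀ a ∈ sizeN H n, ∀ b ∈ sizeN H n,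
      img a m = img b m → img (u a) (r m) = img (u b) (r m) := by
  intro m hm a ha b hb himg
  have hab := nth_eq_nth_of_img_eq ha hb hm himg
  rw [hu.img_eq_img_min ha hb hm hab, hu.img_eq_img_min hb ha hm hab.symm]
  simp_rw [min_comm]

/-- Proposition 2.8(1): if `⟨u_b : b ∈ [H]^n⟩` is a uniform
`n`-dimensional Δ-system witnessed by `ρ` and `⟨r_m : m ⊆ n⟩`, then for all `m ⊆ n`
and `a, b ∈ [H]^n` with `a[m] = b[m]`, we have `u_a[r_m] = u_b[r_m]`. -/
theorem stmt1 (n : ℕ) (hn : 1 ≤ n) (H : Set Ordinal.{0})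
    (u : Set Ordinal.{0} → Set Ordinal.{0})
    (ρ : Ordinal.{0}) (r : Set Ordinal.{0} → Set Ordinal.{0})
    (hu : IsUnifDeltaSysWith H n u ρ r) :
    ∀ m ⊆ Set.Iio (n : Ordinal.{0}), ∀ a ∈ sizeN H n, ∀ b ∈ sizeN H n,
      img a m = img b m → img (u a) (r m) = img (u b) (r m) :=
  stmt1_general n H u ρ r hu

end
end

section
/- Suppose that 1 ≤ n < ω and κ is an infinite cardinal such that Θ_n > κ, i.e., there is a function g : κ^n → ω that is not constant on any product ∏_{i<n} A_i of n infinite subsets A_i ⊆ κ. Then Θ_{n+1} > κ⁺, i.e., there is a function f : (κ⁺)^{n+1} → ω (with values coded in ω) that is not constant on any product ∏_{i<n+1} A_i of (n+1) infinite subsets A_i ⊆ κ⁺. -/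
open Cardinal Set

/-- `f` is constant on no product of `n` infinite subsets of (the ordinals below) `θ`. -/
def NotConstOnProducts (θ : Cardinal.{0}) (n : ℕ) (f : (Fin n → Ordinal.{0}) → ℕ) : Prop :=
  ∀ A : Fin n → Set Ordinal.{0},
    (∀ i, A i ⊆ Set.Iio θ.ord) → (∀ i, (A i).Infinite) →
    ¬ ∃ k, ∀ x : Fin n → Ordinal.{0}, (∀ i, x i ∈ A i) → f x = k

/-! The colouring `f x = ⟨j, g (e_{x j} (x i))_{i ≠ j}⟩` records the position `j` of the strict
maximum of `x` and colours the other coordinates with `g`, after collapsing the at most `κ`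
ordinals below `x j` injectively into `κ` by `e_{x j}`. Let `∏ A i` be a product of infinite
sets. If some `α ∈ A j` has infinitely many elements of every other `A i` below it, then `f`
restricted to the slice `x j = α` is `g` in disguise, hence not constant. Otherwise, comparing
the suprema of the first `ω` elements of the `A i` shows that two different indices can each
carry the strict maximum of a point of the product, so already the first component of `f`
varies. -/

namespace Ordinal

theorem exists_infinite_inter_Iio {s : Set Ordinal.{u}} (hs : s.Infinite) :
    ∃ β, (s ∩ Iio β).Infinite := by
  let f : ℕ → Ordinal.{u} := fun k => hs.natEmbedding s k
  obtain ⟨b, hb⟩ : BddAbove (range f) := bddAbove_of_small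
  have hf : f.Injective := fun k l h => (hs.natEmbedding s).injective (Subtype.ext h)
  refine ⟨Order.succ b, (infinite_range_of_injective hf).mono ?_⟩
  rintro _ ⟨k, rfl⟩
  exact ⟨(hs.natEmbedding s k).2, Order.lt_succ_of_le (hb ⟨k, rfl⟩)⟩

/-- The supremum of the first `ω` elements of `s`. -/
noncomputable def infiniteThreshold (s : Set Ordinal.{u}) : Ordinal.{u} :=
  sInf {β | (s ∩ Iio β).Infinite}

theorem infinite_inter_Iio_iff {s : Set Ordinal.{u}} (hs : s.Infinite) {β : Ordinal.{u}} :
    (s ∩ Iio β).Infinite ↔ infiniteThreshold s ≤ β := by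
  refine ⟨fun h => csInf_le (OrderBot.bddBelow _) h, fun h => ?_⟩
  have hmem : (s ∩ Iio (infiniteThreshold s)).Infinite := csInf_mem (exists_infinite_inter_Iio hs)
  exact hmem.mono (inter_subset_inter_right _ (Iio_subset_Iio h))

theorem finite_inter_Iic_of_lt_infiniteThreshold {s : Set Ordinal.{u}} (hs : s.Infinite)
    {b : Ordinal.{u}} (hb : b < infiniteThreshold s) : (s ∩ Iic b).Finite := by
  have hfin : (s ∩ Iio b).Finite :=
    not_infinite.1 fun h => ((infinite_inter_Iio_iff hs).1 h).not_gt hb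
  refine (hfin.insert b).subset fun a ⟨has, hab⟩ => ?_
  exact (eq_or_lt_of_le hab).imp id fun h => ⟨has, h⟩

theorem exists_mem_forall_lt_of_lt_infiniteThreshold {s : Set Ordinal.{u}} (hs : s.Infinite)
    {t : Set Ordinal.{u}} (ht : t.Finite) (hlt : ∀ b ∈ t, b < infiniteThreshold s) :
    ∃ a ∈ s, ∀ b ∈ t, b < a := by
  have hbad : (⋃ b ∈ t, s ∩ Iic b).Finite :=
    ht.biUnion fun b hb => finite_inter_Iic_of_lt_infiniteThreshold hs (hlt b hb)
  obtain ⟨a, has, hgood⟩ := (hs.sdiff hbad).nonempty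
  simp only [mem_iUnion, mem_inter_iff, mem_Iic, not_exists, not_and] at hgood
  exact ⟨a, has, fun b hb => lt_of_not_ge (hgood b hb has)⟩

theorem exists_mapsTo_Iio_injOn_Iio {α : Ordinal.{u}} {γ : Cardinal.{u}} (h : α.card ≤ γ) :
    ∃ e : Ordinal.{u} → Ordinal.{u}, MapsTo e (Iio α) (Iio γ.ord) ∧ InjOn e (Iio α) := by
  obtain ⟨e⟩ : Nonempty (Iio α ↪ Iio γ.ord) := by
    rwa [← Cardinal.le_def, Cardinal.mk_Iio_ordinal, Cardinal.mk_Iio_ordinal, Cardinal.card_ord,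
      Cardinal.lift_le]
  refine ⟨fun β => if hβ : β < α then e ⟨β, hβ⟩ else 0, fun β hβ => ?_, fun β hβ β' hβ' heq => ?_⟩
  · simp only [dif_pos (show β < α from hβ)]
    exact (e _).2
  · simp only [dif_pos (show β < α from hβ), dif_pos (show β' < α from hβ')] at heq
    exact congrArg Subtype.val (e.injective (Subtype.ext heq))

theorem exists_family_mapsTo_Iio_injOn_Iio (κ : Cardinal.{u}) :
    ∃ e : Ordinal.{u} → Ordinal.{u} → Ordinal.{u}, ∀ α < (Order.succ κ).ord,
      MapsTo (e α) (Iio α) (Iio κ.ord) ∧ InjOn (e α) (Iio α) := by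
  choose! e he using fun α (hα : α < (Order.succ κ).ord) =>
    exists_mapsTo_Iio_injOn_Iio (Order.lt_succ_iff.1 (Cardinal.lt_ord.1 hα))
  exact ⟨e, he⟩

end Ordinal

section TopIndex

variable {ι : Type*}

def IsTopIndex {α : Type*} [LT α] (A : ι → Set α) (j : ι) : Prop :=
  ∃ x : ι → α, (∀ i, x i ∈ A i) ∧ ∀ i ≠ j, x i < x j

def IsRichIndex {α : Type*} [Preorder α] (A : ι → Set α) (j : ι) : Prop :=
  ∃ a ∈ A j, ∀ i ≠ j, (A i ∩ Iio a).Infinite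

open Ordinal

variable [Finite ι] {A : ι → Set Ordinal.{u}}

theorem isTopIndex_of_forall_lt_infiniteThreshold (hA : ∀ i, (A i).Infinite) {j : ι}
    (hlt : ∀ i, ∀ a ∈ A i, a < infiniteThreshold (A j)) : IsTopIndex A j := by
  classical
  choose x hx using fun i => (hA i).nonempty
  obtain ⟨a, haA, ha⟩ := exists_mem_forall_lt_of_lt_infiniteThreshold (hA j) (finite_range x)
    (by rintro _ ⟨i, rfl⟩; exact hlt i _ (hx i))
  refine ⟨Function.update x j a, fun i => ?_, fun i hi => ?_⟩
  · rcases eq_or_ne i j with rfl | hi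
    · simpa using haA
    · simpa [hi] using hx i
  · simpa [hi] using ha _ ⟨i, rfl⟩

theorem isRichIndex_of_forall_infiniteThreshold_lt (hA : ∀ i, (A i).Infinite) {j : ι}
    (hlt : ∀ i ≠ j, infiniteThreshold (A i) < infiniteThreshold (A j)) : IsRichIndex A j := by
  obtain ⟨a, haA, ha⟩ := exists_mem_forall_lt_of_lt_infiniteThreshold (hA j)
    (toFinite ((fun i => infiniteThreshold (A i)) '' {i | i ≠ j}))
    (by rintro _ ⟨i, hi, rfl⟩; exact hlt i hi)
  exact ⟨a, haA, fun i hi => (infinite_inter_Iio_iff (hA i)).2 (ha _ ⟨i, hi, rfl⟩).le⟩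

theorem exists_isRichIndex_or_two_isTopIndex [Nonempty ι] (hA : ∀ i, (A i).Infinite) :
    (∃ j, IsRichIndex A j) ∨ ∃ j₁ j₂, j₁ ≠ j₂ ∧ IsTopIndex A j₁ ∧ IsTopIndex A j₂ := by
  obtain ⟨i₀, hi₀⟩ := Finite.exists_max fun i => infiniteThreshold (A i)
  by_cases hsolo : ∀ i ≠ i₀, infiniteThreshold (A i) < infiniteThreshold (A i₀)
  · exact Or.inl ⟨i₀, isRichIndex_of_forall_infiniteThreshold_lt hA hsolo⟩
  push Not at hsolo
  obtain ⟨j, hj, hi₀j⟩ := hsolo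
  by_cases hbdd : ∀ i, ∀ a ∈ A i, a < infiniteThreshold (A i₀)
  · refine Or.inr ⟨j, i₀, hj, ?_, isTopIndex_of_forall_lt_infiniteThreshold hA hbdd⟩
    exact isTopIndex_of_forall_lt_infiniteThreshold hA fun i a ha => (hbdd i a ha).trans_le hi₀j
  push Not at hbdd
  obtain ⟨i, a, ha, hle⟩ := hbdd
  exact Or.inl ⟨i, a, ha, fun i' _ => (infinite_inter_Iio_iff (hA i')).2 ((hi₀ i').trans hle)⟩

end TopIndex

section TopColoring

variable {α β : Type*} [LinearOrder α] {n : ℕ}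

open Classical in
noncomputable def topColoring (e : α → α → β) (g : (Fin n → β) → ℕ) (x : Fin (n + 1) → α) : ℕ :=
  if h : ∃ j, ∀ i ≠ j, x i < x j then
    Nat.pair h.choose (g fun i => e (x h.choose) (x (h.choose.succAbove i)))
  else 0

variable {e : α → α → β} {g : (Fin n → β) → ℕ}

theorem topColoring_eq_of_forall_lt {x : Fin (n + 1) → α} {j : Fin (n + 1)}
    (hj : ∀ i ≠ j, x i < x j) :
    topColoring e g x = Nat.pair j (g fun i => e (x j) (x (j.succAbove i))) := by
  have hex : ∃ j, ∀ i ≠ j, x i < x j := ⟨j, hj⟩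
  have hchoose : hex.choose = j := by
    by_contra hne
    exact lt_asymm (hj _ hne) (hex.choose_spec j (Ne.symm hne))
  rw [topColoring, dif_pos hex, hchoose]

theorem topColoring_not_const_of_isTopIndex {A : Fin (n + 1) → Set α} {j₁ j₂ : Fin (n + 1)}
    (hne : j₁ ≠ j₂) (h₁ : IsTopIndex A j₁) (h₂ : IsTopIndex A j₂) :
    ¬ ∃ k, ∀ x : Fin (n + 1) → α, (∀ i, x i ∈ A i) → topColoring e g x = k := by
  rintro ⟨k, hk⟩
  obtain ⟨x₁, hx₁A, hx₁⟩ := h₁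
  obtain ⟨x₂, hx₂A, hx₂⟩ := h₂
  have h := (hk x₁ hx₁A).trans (hk x₂ hx₂A).symm
  rw [topColoring_eq_of_forall_lt hx₁, topColoring_eq_of_forall_lt hx₂, Nat.pair_eq_pair] at h
  exact hne (Fin.ext h.1)

end TopColoring

theorem topColoring_not_const_of_isRichIndex {n : ℕ} {κ : Cardinal.{0}}
    {g : (Fin n → Ordinal.{0}) → ℕ} (hg : NotConstOnProducts κ n g)
    {e : Ordinal.{0} → Ordinal.{0} → Ordinal.{0}} {A : Fin (n + 1) → Set Ordinal.{0}}
    {j : Fin (n + 1)} {α : Ordinal.{0}} (hmaps : MapsTo (e α) (Iio α) (Iio κ.ord))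
    (hinj : InjOn (e α) (Iio α)) (hα : α ∈ A j) (hinf : ∀ i ≠ j, (A i ∩ Iio α).Infinite) :
    ¬ ∃ k, ∀ x : Fin (n + 1) → Ordinal.{0}, (∀ i, x i ∈ A i) → topColoring e g x = k := by
  rintro ⟨k, hk⟩
  refine hg (fun i => e α '' (A (j.succAbove i) ∩ Iio α))
    (fun i => (hmaps.mono_left inter_subset_right).image_subset)
    (fun i => (hinf _ (Fin.succAbove_ne j i)).image (hinj.mono inter_subset_right))
    ⟨(Nat.unpair k).2, fun z hz => ?_⟩
  choose y hy hyz using hz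
  let x : Fin (n + 1) → Ordinal.{0} := Fin.insertNth j α y
  have hxA : ∀ i, x i ∈ A i :=
    Fin.succAboveCases j (by simpa [x] using hα) fun i => by simpa [x] using (hy i).1
  have hx : ∀ i ≠ j, x i < x j := fun i hi => by
    obtain ⟨i, rfl⟩ := Fin.exists_succAbove_eq hi
    simpa [x] using (hy i).2
  have hxk := hk x hxA
  rw [topColoring_eq_of_forall_lt hx] at hxk
  simp only [x, Fin.insertNth_apply_same, Fin.insertNth_apply_succAbove, hyz] at hxk
  rw [← hxk, Nat.unpair_pair]

theorem stmt13_general (n : ℕ) (κ : Cardinal.{0})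
    (g : (Fin n → Ordinal.{0}) → ℕ) (hg : NotConstOnProducts κ n g) :
    ∃ f : (Fin (n + 1) → Ordinal.{0}) → ℕ, NotConstOnProducts (Order.succ κ) (n + 1) f := by
  obtain ⟨e, he⟩ := Ordinal.exists_family_mapsTo_Iio_injOn_Iio κ
  refine ⟨topColoring e g, fun A hAκ hA => ?_⟩
  rcases exists_isRichIndex_or_two_isTopIndex hA with ⟨j, α, hα, hinf⟩ | ⟨j₁, j₂, hne, h₁, h₂⟩
  · exact topColoring_not_const_of_isRichIndex hg (he α (hAκ j hα)).1 (he α (hAκ j hα)).2 hα hinf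
  · exact topColoring_not_const_of_isTopIndex hne h₁ h₂

/-- Proposition 5.3: if `1 ≤ n < ω`, `κ` is an infinite cardinal, and
`Θ_n > κ` (witnessed by `g : κ^n → ω` not constant on any product of `n` infinite subsets
of `κ`), then `Θ_{n+1} > κ⁺` (witnessed by some `f : (κ⁺)^{n+1} → ω` not constant on any
product of `n+1` infinite subsets of `κ⁺`). -/
theorem stmt13 (n : ℕ) (hn : 1 ≤ n) (κ : Cardinal.{0}) (hk : ℵ₀ ≤ κ)
    (g : (Fin n → Ordinal.{0}) → ℕ) (hg : NotConstOnProducts κ n g) :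
    ∃ f : (Fin (n + 1) → Ordinal.{0}) → ℕ, NotConstOnProducts (Order.succ κ) (n + 1) f :=
  stmt13_general n κ g hg
end

section
/- For every n with 1 ≤ n < ω, Θ_n ≥ ℵ_n; equivalently, there exists a function f : (ℵ_{n−1})^n → ω that is not constant on any product ∏_{i<n} A_i of n infinite subsets A_i ⊆ ℵ_{n−1}. -/
/-!
Induction on `n`. For `n = 1` any map that is injective on `ω` works. For the step from `ℵ_m` to
`ℵ_{m+1}`, let `f x` record the index `j` of a largest coordinate of `x` together with the value
of the previous counterexample `g` at the other coordinates, moved below `ω_m` by an injection of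
`x j < ω_{m+1}` into `ω_m`. If `f` is constant on `∏ A i`, the index `j` is the same throughout,
so for any `β ∈ A j` the other sets `A i` lie in `[0, β]`; minus the point `β`, their images
under the injection of `β` are infinite subsets of `ω_m` on whose product `g` is constant.
-/

open Cardinal Set

theorem notConstOnProducts_aleph0_one :
    NotConstOnProducts ℵ₀ 1 fun x => toNat (x 0).card := by
  rintro A hA hinf ⟨k, hk⟩
  obtain ⟨s, hs, t, ht, hst⟩ := (hinf 0).nontrivial
  have hconst : ∀ u ∈ A 0, toNat u.card = k := fun u hu =>
    hk (fun _ => u) fun i => Subsingleton.elim i 0 ▸ hu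
  obtain ⟨a, rfl⟩ := Ordinal.lt_omega0.mp (ord_aleph0 ▸ hA 0 hs)
  obtain ⟨b, rfl⟩ := Ordinal.lt_omega0.mp (ord_aleph0 ▸ hA 0 ht)
  have hab := (hconst _ hs).trans (hconst _ ht).symm
  simp only [Ordinal.card_nat, toNat_natCast] at hab
  exact hst (congrArg _ hab)

theorem exists_injOn_Iio_mapsTo_Iio_ord {β : Ordinal.{0}} {c : Cardinal.{0}} (h : β.card ≤ c) :
    ∃ e : Ordinal.{0} → Ordinal.{0}, InjOn e (Iio β) ∧ MapsTo e (Iio β) (Iio c.ord) := by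
  have hmk : #(Iio β) ≤ #(Iio c.ord) := by
    rwa [mk_Iio_ordinal, mk_Iio_ordinal, lift_le, card_ord]
  obtain ⟨emb⟩ := (le_def _ _).mp hmk
  refine ⟨fun x => if hx : x < β then emb ⟨x, hx⟩ else 0, fun x hx y hy hxy => ?_, fun x hx => ?_⟩
  · simp only [dif_pos (show x < β from hx), dif_pos (show y < β from hy)] at hxy
    exact congrArg Subtype.val (emb.injective (Subtype.ext hxy))
  · simpa only [dif_pos (show x < β from hx)] using (emb ⟨x, hx⟩).2

section Step

variable {n : ℕ}

noncomputable def maxIndex (x : Fin (n + 1) → Ordinal.{0}) : Fin (n + 1) :=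
  (Finite.exists_max x).choose

theorem le_apply_maxIndex (x : Fin (n + 1) → Ordinal.{0}) (i : Fin (n + 1)) :
    x i ≤ x (maxIndex x) :=
  (Finite.exists_max x).choose_spec i

/-- The counterexample in `n + 1` variables built from `g`, where `e β` injects `Iio β` into
the domain of `g`. -/
noncomputable def succCounterexample (g : (Fin n → Ordinal.{0}) → ℕ)
    (e : Ordinal.{0} → Ordinal.{0} → Ordinal.{0}) (x : Fin (n + 1) → Ordinal.{0}) : ℕ :=
  let j := maxIndex x
  Nat.pair j (g fun i => e (x j) (x (j.succAbove i)))

theorem subset_Iic_of_maxIndex_eq {A : Fin (n + 1) → Set Ordinal.{0}}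
    {a : Fin (n + 1) → Ordinal.{0}} (ha : ∀ i, a i ∈ A i)
    (hmax : ∀ x : Fin (n + 1) → Ordinal.{0}, (∀ i, x i ∈ A i) → maxIndex x = maxIndex a)
    {i : Fin (n + 1)} (hi : i ≠ maxIndex a) : A i ⊆ Iic (a (maxIndex a)) := by
  intro s hs
  have hx : ∀ l, Function.update a i s l ∈ A l := by
    intro l
    rcases eq_or_ne l i with rfl | hl
    · simpa using hs
    · simpa [hl] using ha l
  have := le_apply_maxIndex (Function.update a i s) i
  rwa [hmax _ hx, Function.update_self, Function.update_of_ne hi.symm] at this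

theorem notConstOnProducts_succCounterexample {c : Cardinal.{0}}
    {g : (Fin n → Ordinal.{0}) → ℕ} (hg : NotConstOnProducts c n g)
    {e : Ordinal.{0} → Ordinal.{0} → Ordinal.{0}}
    (he : ∀ β < (Order.succ c).ord, InjOn (e β) (Iio β) ∧ MapsTo (e β) (Iio β) (Iio c.ord)) :
    NotConstOnProducts (Order.succ c) (n + 1) (succCounterexample g e) := by
  rintro A hA hinf ⟨k, hk⟩
  choose a ha using fun i => (hinf i).nonempty
  set j := maxIndex a
  set β := a j
  have hconst : ∀ x : Fin (n + 1) → Ordinal.{0}, (∀ i, x i ∈ A i) →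
      maxIndex x = j ∧ g (fun i => e (x (maxIndex x)) (x ((maxIndex x).succAbove i))) =
        (Nat.unpair k).2 := by
    intro x hx
    have hxa := (hk x hx).trans (hk a ha).symm
    refine ⟨Fin.ext (Nat.pair_eq_pair.mp hxa).1, ?_⟩
    rw [← hk x hx, succCounterexample, Nat.unpair_pair]
  set A' : Fin n → Set Ordinal.{0} := fun i => A (j.succAbove i) \ {β}
  have hA' : ∀ i, A' i ⊆ Iio β := fun i s hs =>
    lt_of_le_of_ne (subset_Iic_of_maxIndex_eq ha (fun x hx => (hconst x hx).1)
      (Fin.succAbove_ne j i) hs.1) hs.2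
  obtain ⟨hinj, hmaps⟩ := he β (hA j (ha j))
  refine hg (fun i => e β '' A' i) (fun i => (hmaps.mono_left (hA' i)).image_subset)
    (fun i => (infinite_image_iff (hinj.mono (hA' i))).mpr ((hinf _).sdiff (finite_singleton β)))
    ⟨(Nat.unpair k).2, fun y hy => ?_⟩
  choose z hz hzy using hy
  have hx : ∀ l, Fin.insertNth (α := fun _ => Ordinal.{0}) j β z l ∈ A l := by
    intro l
    rcases eq_or_ne l j with rfl | hl
    · simpa using ha j
    · obtain ⟨i, rfl⟩ := Fin.exists_succAbove_eq hl
      simpa using (hz i).1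
  obtain ⟨hj, hgy⟩ := hconst _ hx
  simpa only [hj, Fin.insertNth_apply_same, Fin.insertNth_apply_succAbove, hzy] using hgy

theorem NotConstOnProducts.exists_succ {c : Cardinal.{0}} {g : (Fin n → Ordinal.{0}) → ℕ}
    (hg : NotConstOnProducts c n g) :
    ∃ f, NotConstOnProducts (Order.succ c) (n + 1) f := by
  choose! e he using fun β (hβ : β < (Order.succ c).ord) =>
    exists_injOn_Iio_mapsTo_Iio_ord (Order.lt_succ_iff.mp (lt_ord.mp hβ))
  exact ⟨_, notConstOnProducts_succCounterexample hg he⟩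

end Step

theorem exists_notConstOnProducts_aleph (m : ℕ) :
    ∃ f, NotConstOnProducts (aleph m) (m + 1) f := by
  induction m with
  | zero => exact ⟨_, by simpa using notConstOnProducts_aleph0_one⟩
  | succ m ih =>
    obtain ⟨g, hg⟩ := ih
    simpa [succ_aleph] using hg.exists_succ

/-- Corollary 5.4: `Θ_n ≥ ℵ_n` for all `1 ≤ n < ω`: there is a
function `f : (ℵ_{n-1})^n → ω` that is not constant on any product of `n` infinite
subsets of `ℵ_{n-1}`. -/
theorem stmt14 (n : ℕ) (hn : 1 ≤ n) :
    ∃ f : (Fin n → Ordinal.{0}) → ℕ,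
      NotConstOnProducts (Cardinal.aleph ((n - 1 : ℕ) : Ordinal.{0})) n f := by
  obtain ⟨m, rfl⟩ := Nat.exists_eq_add_of_le' hn
  simpa using exists_notConstOnProducts_aleph m
end

section
/- Suppose that κ ≤ ν are infinite cardinals and λ is a cardinal with λ ≤ ν^{<κ}. Then there exists an injective sequence ⟨x_η : η < λ⟩ of subsets of ν, each of cardinality less than κ, such that for all distinct η, ξ < λ, neither x_η ⊆ x_ξ nor x_ξ ⊆ x_η. -/
/-!
Code a pair `(o, f)` with `o < κ` and `f : [0, o] → ν` by its graph tagged with `o`,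
`{(o, α, f α) : α ≤ o}`. Domains are nonempty, so an inclusion between two such graphs first
forces equal tags and then equal functions: the graphs form an antichain. There are at least
`ν^{<κ}` such pairs, each graph has fewer than `κ` elements, and all graphs live in a set of
size `ν`, which can therefore be identified with a subset of `ν`.
-/

open Cardinal Set

universe u

section SigmaGraph

variable {I : Type u} {A : I → Type u} {B : Type u}

def sigmaGraph (s : Σ i, A i → B) : Set (Σ i, A i × B) :=
  range fun a => ⟨s.1, a, s.2 a⟩

theorem eq_of_sigmaGraph_subset [∀ i, Nonempty (A i)] {s t : Σ i, A i → B}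
    (h : sigmaGraph s ⊆ sigmaGraph t) : s = t := by
  obtain ⟨i, f⟩ := s
  obtain ⟨j, g⟩ := t
  obtain ⟨_, hji⟩ := h ⟨Classical.arbitrary (A i), rfl⟩
  obtain rfl : j = i := congrArg Sigma.fst hji
  congr 1
  funext a
  obtain ⟨b, hba⟩ := h ⟨a, rfl⟩
  obtain ⟨rfl, hg⟩ := Prod.ext_iff.1 (eq_of_heq (Sigma.mk.inj_iff.1 hba).2)
  exact hg.symm

theorem mk_sigmaGraph_le (s : Σ i, A i → B) : #(sigmaGraph s) ≤ #(A s.1) :=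
  mk_range_le

end SigmaGraph

namespace Cardinal

variable {κ ν : Cardinal.{u}}

theorem mk_Iic_lt_lift_of_lt_ord (hκ : ℵ₀ ≤ κ) {o : Ordinal.{u}} (ho : o < κ.ord) :
    #(Iic o) < lift.{u + 1} κ := by
  rw [← Order.Iio_succ, mk_Iio_ordinal, lift_lt, ← lt_ord]
  exact (isSuccLimit_ord hκ).succ_lt ho

theorem mk_sigma_Iic_prod_le (hκν : κ ≤ ν) (hν : ℵ₀ ≤ ν) :
    #(Σ o : Iio κ.ord, Iic o.1 × Iio ν.ord) ≤ lift.{u + 1} ν := by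
  have hνlift : ℵ₀ ≤ lift.{u + 1} ν := by simpa using hν
  have hterm (o : Iio κ.ord) : #(Iic o.1 × Iio ν.ord) ≤ lift.{u + 1} ν := by
    rw [mk_prod, lift_id, lift_id, mk_Iio_ordinal, card_ord]
    calc #(Iic o.1) * lift.{u + 1} ν ≤ lift.{u + 1} ν * lift.{u + 1} ν := by
          gcongr
          rw [← card_ord ν, ← mk_Iio_ordinal]
          exact mk_le_mk_of_subset (Iic_subset_Iio.2 (o.2.trans_le (ord_le_ord.2 hκν)))
      _ = lift.{u + 1} ν := mul_eq_self hνlift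
  calc #(Σ o : Iio κ.ord, Iic o.1 × Iio ν.ord)
      ≤ #(Iio κ.ord) * ⨆ o : Iio κ.ord, #(Iic o.1 × Iio ν.ord) := by
        rw [mk_sigma]
        exact sum_le_mk_mul_iSup _
    _ ≤ lift.{u + 1} ν * lift.{u + 1} ν := by
        gcongr
        · rw [mk_Iio_ordinal, card_ord]
          exact lift_le.2 hκν
        · exact ciSup_le' hterm
    _ = lift.{u + 1} ν := mul_eq_self hνlift

theorem lift_powerlt_le_mk_sigma_Iic_arrow (hν : ν ≠ 0) :
    lift.{u + 1} (ν ^< κ) ≤ #(Σ o : Iio κ.ord, Iic o.1 → Iio ν.ord) := by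
  rw [powerlt, mk_sigma]
  refine lift_iSup_le bddAbove_of_small fun c => ?_
  let o : Iio κ.ord := ⟨(c : Cardinal).ord, ord_lt_ord.2 c.2⟩
  calc lift.{u + 1} (ν ^ (c : Cardinal)) ≤ #(Iic o.1 → Iio ν.ord) := by
        rw [mk_arrow, lift_id, lift_id, mk_Iio_ordinal, card_ord, ← Order.Iio_succ,
          mk_Iio_ordinal, ← lift_power]
        exact lift_le.2 (power_le_power_left hν (by simp [o]))
    _ ≤ _ := le_sum.{u + 1, u + 1} _ o

end Cardinal

/-- from the proof of Proposition 3.12: if `κ ≤ ν` are infinite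
cardinals and `λ ≤ ν^{<κ}`, then there is an injective sequence `⟨x_η : η < λ⟩` of
subsets of `ν` of cardinality `< κ` that is an antichain under inclusion. -/
theorem stmt18 (κ ν lam : Cardinal.{0}) (hk : ℵ₀ ≤ κ) (hkv : κ ≤ ν)
    (hlam : lam ≤ ν ^< κ) :
    ∃ x : Ordinal.{0} → Set Ordinal.{0},
      (∀ η < lam.ord, x η ⊆ Set.Iio ν.ord ∧ #(x η) < Cardinal.lift.{1,0} κ) ∧
      (∀ η < lam.ord, ∀ ξ < lam.ord, η ≠ ξ → ¬ x η ⊆ x ξ) := by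
  have hν : ℵ₀ ≤ ν := hk.trans hkv
  obtain ⟨J⟩ : Nonempty (Iio lam.ord ↪ Σ o : Iio κ.ord, Iic o.1 → Iio ν.ord) := by
    rw [← le_def, mk_Iio_ordinal, card_ord]
    exact (lift_le.2 hlam).trans (lift_powerlt_le_mk_sigma_Iic_arrow (aleph0_pos.trans_le hν).ne')
  obtain ⟨e⟩ : Nonempty ((Σ o : Iio κ.ord, Iic o.1 × Iio ν.ord) ↪ Iio ν.ord) := by
    rw [← le_def, mk_Iio_ordinal, card_ord]
    exact mk_sigma_Iic_prod_le hkv hν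
  have he : Function.Injective fun z => (e z : Ordinal) := Subtype.val_injective.comp e.injective
  let code (η : Iio lam.ord) : Set Ordinal := (fun z => (e z : Ordinal)) '' sigmaGraph (J η)
  refine ⟨fun η => if h : η < lam.ord then code ⟨η, h⟩ else ∅, fun η hη => ?_,
    fun η hη ξ hξ hne hsub => ?_⟩
  · simp only [dif_pos hη]
    refine ⟨image_subset_iff.2 fun z _ => (e z).2, ?_⟩
    exact mk_image_le.trans_lt
      ((mk_sigmaGraph_le _).trans_lt (mk_Iic_lt_lift_of_lt_ord hk (J _).1.2))
  · simp only [dif_pos hη, dif_pos hξ] at hsub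
    have hgraph := (image_subset_image_iff he).1 hsub
    exact hne (congrArg Subtype.val (J.injective (eq_of_sigmaGraph_subset hgraph)))
end
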